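/- Let $(X_n)_{n\ge 0}$ be an irreducible Markov chain on a countable state space $S$, and let $u: S \to \mathbb{N}_{\ge 1}$ be a bounded function. Define stopping times $\sigma_0 = 0$, $\sigma_{n+1} = \sigma_n + u(X_{\sigma_n})$, and the embedded chain $\hat{X}_n = X_{\sigma_n}$. If there exist a lower-bounded function $f: S \to \mathbb{R}$, a constant $\delta > 0$, and a finite set $S_0 \subset S$ such that (i) $\mathbb{E}[f(\hat{X}_1) - f(\hat{X}_0) \mid \hat{X}_0 = y] \le -\delta$ for every $y \in S \setminus S_0$, and (ii) $\mathbb{E}[f(\hat{X}_1) \mid \hat{X}_0 = y] < \infty$ for every $y \in S_0$, then $(X_n)$ is positive recurrent. -/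

import Mathlib

open MeasureTheory Filter Matrix
open scoped Classical

/-- A time-homogeneous Markov chain on a state space `S`, given by its
transition matrix `P` together with the family of path laws `μ y`
(the law of the trajectory started at `y`), determined on cylinder sets. -/
structure MarkovChain (S : Type) [MeasurableSpace S] where
  P : S → S → ℝ
  P_nonneg : ∀ s s', 0 ≤ P s s'
  P_rowsum : ∀ s, HasSum (P s) 1
  μ : S → Measure (ℕ → S)
  isProb : ∀ y, IsProbabilityMeasure (μ y)
  cylinder : ∀ (y : S) (n : ℕ) (path : ℕ → S),
      μ y {ω | ∀ i ≤ n, ω i = path i}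
        = (if path 0 = y then 1 else 0)
            * ∏ i ∈ Finset.range n, ENNReal.ofReal (P (path i) (path (i + 1)))

/-- `n`-step transition probabilities of a transition matrix. -/
noncomputable def nstepFn {S : Type} (P : S → S → ℝ) : ℕ → S → S → ℝ
  | 0 => fun s s' => if s = s' then 1 else 0
  | n + 1 => fun s s' => ∑' t, nstepFn P n s t * P t s'

/-- `n`-step transition probabilities of a Markov chain. -/
noncomputable def nstep {S : Type} [MeasurableSpace S] (M : MarkovChain S) :
    ℕ → S → S → ℝ := nstepFn M.P

/-- Irreducibility: every state is reachable from every state. -/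
def MCIrreducible {S : Type} [MeasurableSpace S] (M : MarkovChain S) : Prop :=
  ∀ s s', ∃ n, 0 < nstep M n s s'

/-- Positive recurrence: every state has finite expected return time
(the expected return time equals `∑_{n≥0} P(no return within the first n steps)`). -/
def PositiveRecurrent {S : Type} [MeasurableSpace S] (M : MarkovChain S) : Prop :=
  ∀ y : S, (∑' n : ℕ, M.μ y {ω | ∀ i, 1 ≤ i → i ≤ n → ω i ≠ y}) ≠ ⊤

/-- Transience: every state is visited finitely often, almost surely. -/
def MCTransient {S : Type} [MeasurableSpace S] (M : MarkovChain S) : Prop :=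
  ∀ x y : S, M.μ x {ω | {n : ℕ | ω n = y}.Infinite} = 0

/-- The sampling times `σ_0 = 0`, `σ_{n+1} = σ_n + u(ω_{σ_n})`. -/
def sigmaT {S : Type} (u : S → ℕ) (ω : ℕ → S) : ℕ → ℕ
  | 0 => 0
  | n + 1 => sigmaT u ω n + u (ω (sigmaT u ω n))

/-!
Put `W = (f - c) / δ` with `c` a lower bound of `f`: outside `S0` one step of the embedded
chain lowers `W` by at least `1` in mean. By irreducibility there are `m ≥ 1` and `β < 1` such
that from every state of `S0` the chain misses `y` during its next `m` steps with probability at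
most `β`. Group the embedded steps into trials: `m` embedded steps (hence at least `m` steps of
the chain) from a state of `S0`, one step elsewhere; a trial succeeds if it starts in `S0` and
the chain visits `y` within `m` steps. If `C` bounds the mean of `W` after `m` embedded steps
from `S0`, then `V = W + (C + 1) / (1 - β)` satisfies `E[V(next state); trial fails] + 1 ≤ V`,
so by Foster's argument for the chain of trial endpoints killed at the first success (the strong
Markov property at the trial times) the mean number of trials up to the first success is at
most `V y`. A trial lasts at most `U * m` steps, which bounds the mean return time to `y`.
-/

open scoped ENNReal

lemma tsum_comp_div_eq_mul_tsum (f : ℕ → ℝ≥0∞) {L : ℕ} (hL : L ≠ 0) :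
    ∑' n, f (n / L) = L * ∑' k, f k := by
  have : NeZero L := ⟨hL⟩
  calc ∑' n, f (n / L) = ∑' p : ℕ × Fin L, f p.1 := (Nat.divModEquiv L).tsum_eq fun p => f p.1
    _ = L * ∑' k, f k := by
      rw [ENNReal.tsum_prod (f := fun k (_ : Fin L) => f k), ← ENNReal.tsum_mul_left]
      simp

lemma Set.Finite.exists_lt_forall_le {α β : Type*} [LinearOrder β] [OrderBot β] {s : Set α}
    (hs : s.Finite) {f : α → β} {b : β} (hb : ⊥ < b) (hf : ∀ x ∈ s, f x < b) :
    ∃ c < b, ∀ x ∈ s, f x ≤ c :=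
  ⟨hs.toFinset.sup f, (Finset.sup_lt_iff hb).2 fun x hx => hf x (hs.mem_toFinset.1 hx),
    fun _ hx => Finset.le_sup (hs.mem_toFinset.2 hx)⟩

lemma ENNReal.div_one_sub_mul_add {a β : ℝ≥0∞} (hβ : β < 1) :
    a / (1 - β) * β + a = a / (1 - β) := by
  have h0 : 1 - β ≠ 0 := (tsub_pos_of_lt hβ).ne'
  calc a / (1 - β) * β + a = a / (1 - β) * β + a / (1 - β) * (1 - β) := by
        rw [ENNReal.div_mul_cancel h0 (ENNReal.sub_ne_top ENNReal.one_ne_top)]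
    _ = a / (1 - β) := by rw [← mul_add, add_tsub_cancel_of_le hβ.le, mul_one]

lemma lintegral_ofReal_sub_div_eq {Ω : Type*} [MeasurableSpace Ω] {μ : Measure Ω}
    [IsProbabilityMeasure μ] {X : Ω → ℝ} (hX : Integrable X μ) {c : ℝ} (hc : ∀ ω, c ≤ X ω)
    {δ : ℝ} (hδ : 0 ≤ δ) :
    ∫⁻ ω, ENNReal.ofReal ((X ω - c) / δ) ∂μ = ENNReal.ofReal ((∫ ω, X ω ∂μ - c) / δ) := by
  have hint : Integrable (fun ω => (X ω - c) / δ) μ := (hX.sub (integrable_const c)).div_const δ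
  rw [← ofReal_integral_eq_lintegral_ofReal hint
      (ae_of_all _ fun ω => div_nonneg (sub_nonneg.2 (hc ω)) hδ),
    integral_div, integral_sub hX (integrable_const c), integral_const]
  simp

lemma nstepFn_nonneg {S : Type} {P : S → S → ℝ} (hP : ∀ s t, 0 ≤ P s t) :
    ∀ n s t, 0 ≤ nstepFn P n s t
  | 0, s, t => by by_cases h : s = t <;> simp [nstepFn, h]
  | n + 1, s, _ => tsum_nonneg fun r => mul_nonneg (nstepFn_nonneg hP n s r) (hP r _)

namespace Trajectory

variable {S : Type}

def shift (n : ℕ) (ω : ℕ → S) : ℕ → S := fun i => ω (n + i)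

def cyl (n : ℕ) (p : ℕ → S) : Set (ℕ → S) := {ω | ∀ i ≤ n, ω i = p i}

def initSeg (n : ℕ) (ω : ℕ → S) : Fin (n + 1) → S := fun i => ω i

/-- `A` lies in the σ-algebra of events prior to `T`. -/
def IsEventBefore (T : (ℕ → S) → ℕ) (A : Set (ℕ → S)) : Prop :=
  ∀ ω ω', (∀ i ≤ T ω, ω i = ω' i) → ω ∈ A → ω' ∈ A

def IsStoppingTime (T : (ℕ → S) → ℕ) : Prop :=
  ∀ ω ω', (∀ i ≤ T ω, ω i = ω' i) → T ω' = T ω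

lemma isStoppingTime_const (n : ℕ) : IsStoppingTime fun _ : ℕ → S => n :=
  fun _ _ _ => rfl

lemma isEventBefore_cyl (n : ℕ) (p : ℕ → S) : IsEventBefore (fun _ => n) (cyl n p) :=
  fun _ _ h hω i hi => (h i hi).symm.trans (hω i hi)

lemma IsEventBefore.inter_setOf_eq {T : (ℕ → S) → ℕ} {A : Set (ℕ → S)} (hT : IsStoppingTime T)
    (hA : IsEventBefore T A) (n : ℕ) : IsEventBefore (fun _ => n) (A ∩ {ω | T ω = n}) := by
  rintro ω ω' h ⟨hωA, hωT⟩
  have h' : ∀ i ≤ T ω, ω i = ω' i := hωT ▸ h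
  exact ⟨hA ω ω' h' hωA, (hT ω ω' h').trans hωT⟩

lemma iUnion_inter_preimage_initSeg (n : ℕ) (A : Set (ℕ → S)) :
    ⋃ q, A ∩ initSeg n ⁻¹' {q} = A := by
  ext ω; simp

lemma pairwise_disjoint_inter_preimage_initSeg (n : ℕ) (A : Set (ℕ → S)) :
    Pairwise (Function.onFun Disjoint fun q => A ∩ initSeg n ⁻¹' {q}) :=
  fun _ _ hqq' => ((Set.disjoint_singleton.2 hqq').preimage _).mono
    Set.inter_subset_right Set.inter_subset_right

lemma IsEventBefore.inter_preimage_initSeg_eq_cyl {n : ℕ} {A : Set (ℕ → S)}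
    (hA : IsEventBefore (fun _ => n) A) {q : Fin (n + 1) → S} {p : ℕ → S}
    (hp : p ∈ A ∩ initSeg n ⁻¹' {q}) : A ∩ initSeg n ⁻¹' {q} = cyl n p := by
  ext ω
  simp only [Set.mem_inter_iff, Set.mem_preimage, Set.mem_singleton_iff, cyl, Set.mem_ofPred_eq]
  constructor
  · rintro ⟨-, hω⟩ i hi
    exact congrFun (hω.trans hp.2.symm) ⟨i, by omega⟩
  · intro hω
    refine ⟨hA p ω (fun i hi => (hω i hi).symm) hp.1, hp.2 ▸ funext fun i => ?_⟩
    exact hω i (by omega)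

lemma cyl_inter_cyl_of_mem {n n' : ℕ} (h : n ≤ n') {p p' ω : ℕ → S} (hω : ω ∈ cyl n p)
    (hω' : ω ∈ cyl n' p') : cyl n p ∩ cyl n' p' = cyl n' p' := by
  refine Set.inter_eq_right.2 fun τ hτ i hi => ?_
  rw [hτ i (hi.trans h), ← hω' i (hi.trans h), hω i hi]

lemma isPiSystem_cyl : IsPiSystem {A : Set (ℕ → S) | ∃ n p, A = cyl n p} := by
  rintro _ ⟨n, p, rfl⟩ _ ⟨n', p', rfl⟩ ⟨ω, hω, hω'⟩
  rcases le_total n n' with h | h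
  · exact ⟨n', p', cyl_inter_cyl_of_mem h hω hω'⟩
  · exact ⟨n, p, Set.inter_comm _ _ ▸ cyl_inter_cyl_of_mem h hω' hω⟩

lemma IsEventBefore.measurableSet_generateFrom_cyl [Countable S] {n : ℕ} {A : Set (ℕ → S)}
    (hA : IsEventBefore (fun _ => n) A) :
    MeasurableSet[MeasurableSpace.generateFrom {A | ∃ n p, A = cyl n p}] A := by
  rw [← iUnion_inter_preimage_initSeg n A]
  refine MeasurableSet.iUnion fun q => ?_
  rcases (A ∩ initSeg n ⁻¹' {q}).eq_empty_or_nonempty with h | ⟨p, hp⟩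
  · exact h ▸ (MeasurableSpace.generateFrom _).measurableSet_empty
  · exact hA.inter_preimage_initSeg_eq_cyl hp ▸
      MeasurableSpace.measurableSet_generateFrom ⟨n, p, rfl⟩

def iterTime (τ : (ℕ → S) → ℕ) (ω : ℕ → S) : ℕ → ℕ
  | 0 => 0
  | k + 1 => iterTime τ ω k + τ (shift (iterTime τ ω k) ω)

def survivalSet (τ : (ℕ → S) → ℕ) (D : Set (ℕ → S)) (k : ℕ) : Set (ℕ → S) :=
  {ω | ∀ j < k, shift (iterTime τ ω j) ω ∈ D}

lemma shift_zero (ω : ℕ → S) : shift 0 ω = ω :=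
  funext fun i => by simp [shift]

lemma iterTime_one (τ : (ℕ → S) → ℕ) (ω : ℕ → S) : iterTime τ ω 1 = τ ω := by
  simp [iterTime, shift_zero]

lemma iterTime_mono (τ : (ℕ → S) → ℕ) (ω : ℕ → S) : Monotone (iterTime τ ω) :=
  monotone_nat_of_le_succ fun _ => Nat.le_add_right _ _

lemma iterTime_le_mul {τ : (ℕ → S) → ℕ} {L : ℕ} (h : ∀ ω, τ ω ≤ L) (ω : ℕ → S) (k : ℕ) :
    iterTime τ ω k ≤ L * k := by
  induction k with
  | zero => simp [iterTime]
  | succ k ih => rw [iterTime, Nat.mul_succ]; exact Nat.add_le_add ih (h _)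

lemma le_iterTime {τ : (ℕ → S) → ℕ} (h : ∀ ω, 1 ≤ τ ω) (ω : ℕ → S) (k : ℕ) :
    k ≤ iterTime τ ω k := by
  induction k with
  | zero => exact Nat.zero_le _
  | succ k ih => rw [iterTime]; exact Nat.add_le_add ih (h _)

lemma isStoppingTime_iterTime {τ : (ℕ → S) → ℕ} (hτ : IsStoppingTime τ) (k : ℕ) :
    IsStoppingTime fun ω => iterTime τ ω k := by
  induction k with
  | zero => exact fun _ _ _ => rfl
  | succ k ih =>
    intro ω ω' h
    have hk : iterTime τ ω' k = iterTime τ ω k :=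
      ih ω ω' fun i hi => h i (hi.trans (iterTime_mono τ ω k.le_succ))
    have hτk : τ (shift (iterTime τ ω k) ω') = τ (shift (iterTime τ ω k) ω) :=
      hτ _ _ fun i hi => h _ (Nat.add_le_add_left hi _)
    show iterTime τ ω' k + τ (shift (iterTime τ ω' k) ω') = _
    rw [hk, hτk]
    rfl

lemma isStoppingTime_iterTime_apply_zero {τ : (ℕ → S) → ℕ} (hτ : IsStoppingTime τ)
    (N : S → ℕ) : IsStoppingTime fun ω => iterTime τ ω (N (ω 0)) := fun ω ω' h => by
  simp only [← h 0 (Nat.zero_le _)]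
  exact isStoppingTime_iterTime hτ (N (ω 0)) ω ω' h

lemma isEventBefore_survivalSet {τ : (ℕ → S) → ℕ} (hτ : IsStoppingTime τ) {D : Set (ℕ → S)}
    (hD : IsEventBefore τ D) (k : ℕ) :
    IsEventBefore (fun ω => iterTime τ ω k) (survivalSet τ D k) := by
  intro ω ω' h hω j hj
  have hjk : iterTime τ ω (j + 1) ≤ iterTime τ ω k := iterTime_mono τ ω hj
  have hj' : iterTime τ ω' j = iterTime τ ω j := isStoppingTime_iterTime hτ j ω ω' fun i hi =>
    h i (hi.trans ((iterTime_mono τ ω j.le_succ).trans hjk))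
  rw [hj']
  exact hD _ _ (fun i hi => h _ ((Nat.add_le_add_left hi _).trans hjk)) (hω j hj)

lemma mem_survivalSet_succ {τ : (ℕ → S) → ℕ} {D : Set (ℕ → S)} {k : ℕ} {ω : ℕ → S} :
    ω ∈ survivalSet τ D (k + 1) ↔ ω ∈ survivalSet τ D k ∧ shift (iterTime τ ω k) ω ∈ D := by
  simp only [survivalSet, Set.mem_ofPred_eq, Nat.lt_succ_iff_lt_or_eq, or_imp, forall_and,
    forall_eq]

def avoidSet (y : S) (n : ℕ) : Set (ℕ → S) := {ω | ∀ i, 1 ≤ i → i ≤ n → ω i ≠ y}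

noncomputable def trialTime (u : S → ℕ) (S0 : Set S) (m : ℕ) (ω : ℕ → S) : ℕ :=
  iterTime (fun ω => u (ω 0)) ω (if ω 0 ∈ S0 then m else 1)

def trialFailure (S0 : Set S) (y : S) (m : ℕ) : Set (ℕ → S) :=
  {ω | ω 0 ∈ S0 → ω ∈ avoidSet y m}

variable {u : S → ℕ} {S0 : Set S} {m : ℕ}

lemma isStoppingTime_comp_apply_zero (g : S → ℕ) : IsStoppingTime fun ω : ℕ → S => g (ω 0) :=
  fun ω ω' h => show g (ω' 0) = g (ω 0) by rw [h 0 (Nat.zero_le _)]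

lemma isStoppingTime_trialTime : IsStoppingTime (trialTime u S0 m) :=
  isStoppingTime_iterTime_apply_zero (isStoppingTime_comp_apply_zero u)
    fun s => if s ∈ S0 then m else 1

lemma le_trialTime (hu1 : ∀ s, 1 ≤ u s) {ω : ℕ → S} (h0 : ω 0 ∈ S0) : m ≤ trialTime u S0 m ω := by
  rw [trialTime, if_pos h0]
  exact le_iterTime (fun _ => hu1 _) ω m

lemma trialTime_le {U : ℕ} (huU : ∀ s, u s ≤ U) (hm : 1 ≤ m) (ω : ℕ → S) :
    trialTime u S0 m ω ≤ U * m :=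
  (iterTime_le_mul (fun _ => huU _) ω _).trans (Nat.mul_le_mul_left _ (by split_ifs <;> omega))

lemma isEventBefore_trialFailure (hu1 : ∀ s, 1 ≤ u s) (y : S) :
    IsEventBefore (trialTime u S0 m) (trialFailure S0 y m) := by
  intro ω ω' h hω h0' i hi1 him
  have h0 : ω 0 ∈ S0 := (h 0 (Nat.zero_le _)).symm ▸ h0'
  rw [← h i (him.trans (le_trialTime hu1 h0))]
  exact hω h0 i hi1 him

lemma avoidSet_subset_survivalSet (hu1 : ∀ s, 1 ≤ u s) {U : ℕ} (huU : ∀ s, u s ≤ U)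
    (hm : 1 ≤ m) (y : S) (n : ℕ) :
    avoidSet y n ⊆ survivalSet (trialTime u S0 m) (trialFailure S0 y m) (n / (U * m)) := by
  intro ω hω j hj h0 i hi1 him
  set ρ := iterTime (trialTime u S0 m) ω j
  have hρ : iterTime (trialTime u S0 m) ω (j + 1) = ρ + trialTime u S0 m (shift ρ ω) := rfl
  have hnext := iterTime_le_mul (trialTime_le (S0 := S0) huU hm) ω (j + 1)
  have hn : (j + 1) * (U * m) ≤ n :=
    (Nat.le_div_iff_mul_le (Nat.mul_pos (hu1 y |>.trans (huU y)) hm)).1 hj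
  have := le_trialTime (m := m) hu1 h0
  exact hω (ρ + i) (by omega) (by rw [mul_comm] at hn; omega)

section

variable [MeasurableSpace S]

lemma measurable_shift (n : ℕ) : Measurable (shift (S := S) n) :=
  measurable_pi_lambda _ fun i => measurable_pi_apply (n + i)

lemma measurable_initSeg (n : ℕ) : Measurable (initSeg (S := S) n) :=
  measurable_pi_lambda _ fun _ => measurable_pi_apply _

variable [MeasurableSingletonClass S]

lemma measurableSet_apply_eq (k : ℕ) (t : S) : MeasurableSet {ω : ℕ → S | ω k = t} :=
  (measurableSet_singleton t).preimage (measurable_pi_apply k)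

variable [Countable S]

lemma IsEventBefore.measurableSet {T : (ℕ → S) → ℕ} {A : Set (ℕ → S)}
    (hT : IsStoppingTime T) (hA : IsEventBefore T A) : MeasurableSet A := by
  have hpieces : ⋃ n, A ∩ {ω | T ω = n} = A := by ext; simp
  rw [← hpieces]
  refine MeasurableSet.iUnion fun n => ?_
  have hdet := hA.inter_setOf_eq hT n
  have : A ∩ {ω | T ω = n} = initSeg n ⁻¹' (initSeg n '' (A ∩ {ω | T ω = n})) := by
    refine (Set.subset_preimage_image _ _).antisymm ?_
    rintro ω ⟨ω₀, hω₀, hinit⟩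
    exact hdet ω₀ ω (fun i (hi : i ≤ n) => congrFun hinit ⟨i, by omega⟩) hω₀
  rw [this]
  exact measurable_initSeg n (Set.to_countable _).measurableSet

lemma measurableSet_cyl (n : ℕ) (p : ℕ → S) : MeasurableSet (cyl n p) :=
  (isEventBefore_cyl n p).measurableSet (isStoppingTime_const n)

lemma generateFrom_cyl :
    MeasurableSpace.generateFrom {A : Set (ℕ → S) | ∃ n p, A = cyl n p} = MeasurableSpace.pi := by
  refine le_antisymm (MeasurableSpace.generateFrom_le ?_) ?_
  · rintro _ ⟨n, p, rfl⟩
    exact measurableSet_cyl n p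
  · rw [MeasurableSpace.pi_eq_generateFrom_projections]
    refine MeasurableSpace.generateFrom_le ?_
    rintro _ ⟨i, B, -, rfl⟩
    exact IsEventBefore.measurableSet_generateFrom_cyl (n := i)
      fun ω ω' h (hω : ω i ∈ B) => show ω' i ∈ B from h i le_rfl ▸ hω

lemma IsStoppingTime.measurable {T : (ℕ → S) → ℕ} (hT : IsStoppingTime T) : Measurable T :=
  measurable_to_countable' fun n => by
    convert (IsEventBefore.inter_setOf_eq (A := Set.univ) hT (fun _ _ _ h => h) n).measurableSet
      (isStoppingTime_const n) using 1
    ext; simp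

lemma IsStoppingTime.measurable_apply {T : (ℕ → S) → ℕ} (hT : IsStoppingTime T) :
    Measurable fun ω : ℕ → S => ω (T ω) := by
  have heval : Measurable fun p : (ℕ → S) × ℕ => p.1 p.2 :=
    measurable_from_prod_countable_left fun n => measurable_pi_apply n
  exact heval.comp (measurable_id.prodMk hT.measurable)

end

end Trajectory

namespace MarkovChain

open Trajectory

variable {S : Type} [MeasurableSpace S] (M : MarkovChain S)

instance isProbabilityMeasure_μ (y : S) : IsProbabilityMeasure (M.μ y) := M.isProb y

lemma measure_cyl (y : S) (n : ℕ) (p : ℕ → S) :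
    M.μ y (cyl n p) = (if p 0 = y then 1 else 0)
      * ∏ i ∈ Finset.range n, ENNReal.ofReal (M.P (p i) (p (i + 1))) :=
  M.cylinder y n p

lemma measure_cyl_inter_shift_cyl (y : S) (n m : ℕ) (p q : ℕ → S) :
    M.μ y (cyl n p ∩ shift n ⁻¹' cyl m q) = M.μ y (cyl n p) * M.μ (p n) (cyl m q) := by
  by_cases hq : q 0 = p n
  · set r : ℕ → S := fun i => if i ≤ n then p i else q (i - n) with hr
    have hr_left : ∀ i ≤ n, r i = p i := fun i hi => if_pos hi
    have hr_right : ∀ i, r (n + i) = q i := by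
      intro i
      rcases Nat.eq_zero_or_pos i with rfl | hi
      · simp [hr, hq]
      · simp [hr, show ¬ n + i ≤ n by omega]
    have hset : cyl n p ∩ shift n ⁻¹' cyl m q = cyl (n + m) r := by
      ext ω
      simp only [cyl, shift, Set.mem_inter_iff, Set.mem_preimage, Set.mem_ofPred_eq]
      constructor
      · rintro ⟨hp, hq⟩ i hi
        rcases le_or_gt i n with hin | hin
        · rw [hr_left i hin, hp i hin]
        · obtain ⟨j, rfl⟩ := Nat.exists_eq_add_of_lt hin
          rw [add_assoc, hr_right, hq _ (by omega)]
      · intro h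
        exact ⟨fun i hi => (h i (by omega)).trans (hr_left i hi),
          fun i hi => (h (n + i) (by omega)).trans (hr_right i)⟩
    rw [hset, measure_cyl, measure_cyl, measure_cyl, Finset.prod_range_add, if_pos hq,
      hr_left 0 (Nat.zero_le n)]
    have hleft : ∀ i ∈ Finset.range n, ENNReal.ofReal (M.P (r i) (r (i + 1)))
        = ENNReal.ofReal (M.P (p i) (p (i + 1))) := fun i hi => by
      rw [hr_left i (by simp at hi; omega), hr_left (i + 1) (by simp at hi; omega)]
    have hright : ∀ i ∈ Finset.range m, ENNReal.ofReal (M.P (r (n + i)) (r (n + i + 1)))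
        = ENNReal.ofReal (M.P (q i) (q (i + 1))) := fun i _ => by
      rw [hr_right, add_assoc, hr_right]
    rw [Finset.prod_congr rfl hleft, Finset.prod_congr rfl hright]
    ring
  · have hempty : cyl n p ∩ shift n ⁻¹' cyl m q = ∅ :=
      Set.eq_empty_of_forall_notMem fun ω ⟨hp, hq'⟩ =>
        hq ((hq' 0 (Nat.zero_le m)).symm.trans (hp n le_rfl))
    rw [hempty, M.measure_cyl (p n), if_neg hq]
    simp

lemma measure_apply_zero_eq (y : S) : M.μ y {ω | ω 0 = y} = 1 := by
  have hcyl : {ω : ℕ → S | ω 0 = y} = cyl 0 fun _ => y := by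
    ext ω; simp [cyl]
  simp [hcyl, measure_cyl]

lemma ofReal_P_le_measure_apply_one (s t : S) :
    ENNReal.ofReal (M.P s t) ≤ M.μ s {ω | ω 1 = t} := by
  calc ENNReal.ofReal (M.P s t) = M.μ s (cyl 1 fun i => if i = 0 then s else t) := by
        simp [measure_cyl]
    _ ≤ M.μ s {ω | ω 1 = t} := measure_mono fun ω hω => by simpa using hω 1 le_rfl

variable [MeasurableSingletonClass S]

lemma ae_apply_zero_eq (y : S) : ∀ᵐ ω ∂M.μ y, ω 0 = y := by
  rw [ae_iff_measure_eq (measurableSet_apply_eq 0 y).nullMeasurableSet,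
    measure_apply_zero_eq, measure_univ]

lemma lintegral_apply_zero (y : S) (g : S → ℝ≥0∞) : ∫⁻ ω, g (ω 0) ∂M.μ y = g y := by
  rw [lintegral_congr_ae ((M.ae_apply_zero_eq y).mono fun ω h => by rw [h])]
  simp

lemma ae_apply_sigmaT_one_eq (u : S → ℕ) (s : S) :
    ∀ᵐ ω ∂M.μ s, ω (sigmaT u ω 1) = ω (u s) ∧ ω (sigmaT u ω 0) = s := by
  filter_upwards [M.ae_apply_zero_eq s] with ω h0
  simp [sigmaT, h0]

section

variable [Countable S]

lemma map_shift_restrict_cyl (y : S) (n : ℕ) (p : ℕ → S) :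
    ((M.μ y).restrict (cyl n p)).map (shift n) = M.μ y (cyl n p) • M.μ (p n) := by
  refine ext_of_generate_finite _ generateFrom_cyl.symm isPiSystem_cyl ?_ ?_
  · rintro _ ⟨m, q, rfl⟩
    rw [Measure.map_apply (measurable_shift n) (measurableSet_cyl m q),
      Measure.restrict_apply ((measurableSet_cyl m q).preimage (measurable_shift n)),
      Set.inter_comm, measure_cyl_inter_shift_cyl]
    rfl
  · rw [Measure.map_apply (measurable_shift n) MeasurableSet.univ]
    simp

lemma setLIntegral_cyl_comp_shift (y : S) (n : ℕ) (p : ℕ → S) {H : (ℕ → S) → ℝ≥0∞}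
    (hH : Measurable H) :
    ∫⁻ ω in cyl n p, H (shift n ω) ∂M.μ y = M.μ y (cyl n p) * ∫⁻ ω, H ω ∂M.μ (p n) := by
  rw [← lintegral_map hH (measurable_shift n), map_shift_restrict_cyl, lintegral_smul_measure,
    smul_eq_mul]

lemma setLIntegral_comp_shift (y : S) {n : ℕ} {A : Set (ℕ → S)}
    (hA : IsEventBefore (fun _ => n) A) {H : (ℕ → S) → ℝ≥0∞} (hH : Measurable H) :
    ∫⁻ ω in A, H (shift n ω) ∂M.μ y = ∫⁻ ω in A, ∫⁻ ω', H ω' ∂M.μ (ω n) ∂M.μ y := by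
  have hmeas : ∀ q, MeasurableSet (A ∩ initSeg n ⁻¹' {q}) := fun q =>
    (hA.measurableSet (isStoppingTime_const n)).inter
      (measurable_initSeg n (measurableSet_singleton q))
  rw [← iUnion_inter_preimage_initSeg n A,
    lintegral_iUnion hmeas (pairwise_disjoint_inter_preimage_initSeg n A),
    lintegral_iUnion hmeas (pairwise_disjoint_inter_preimage_initSeg n A)]
  refine tsum_congr fun q => ?_
  rcases (A ∩ initSeg n ⁻¹' {q}).eq_empty_or_nonempty with h | ⟨p, hp⟩
  · simp [h]
  · rw [hA.inter_preimage_initSeg_eq_cyl hp, setLIntegral_cyl_comp_shift M y n p hH,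
      setLIntegral_congr_fun (measurableSet_cyl n p) fun ω hω => by rw [hω n le_rfl],
      setLIntegral_const, mul_comm]

theorem setLIntegral_comp_shift_stoppingTime (y : S) {T : (ℕ → S) → ℕ} (hT : IsStoppingTime T)
    {A : Set (ℕ → S)} (hA : IsEventBefore T A) {H : (ℕ → S) → ℝ≥0∞} (hH : Measurable H) :
    ∫⁻ ω in A, H (shift (T ω) ω) ∂M.μ y = ∫⁻ ω in A, ∫⁻ ω', H ω' ∂M.μ (ω (T ω)) ∂M.μ y := by
  have hpieces : ⋃ n, A ∩ {ω | T ω = n} = A := by ext; simp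
  have hmeas : ∀ n, MeasurableSet (A ∩ {ω | T ω = n}) := fun n =>
    (hA.inter_setOf_eq hT n).measurableSet (isStoppingTime_const n)
  have hdisj : Pairwise (Function.onFun Disjoint fun n => A ∩ {ω | T ω = n}) :=
    fun n n' hnn' => Set.disjoint_left.2 fun ω hω hω' => hnn' (hω.2.symm.trans hω'.2)
  rw [← hpieces, lintegral_iUnion hmeas hdisj, lintegral_iUnion hmeas hdisj]
  refine tsum_congr fun n => ?_
  calc ∫⁻ ω in A ∩ {ω | T ω = n}, H (shift (T ω) ω) ∂M.μ y
      = ∫⁻ ω in A ∩ {ω | T ω = n}, H (shift n ω) ∂M.μ y :=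
        setLIntegral_congr_fun (hmeas n) fun ω hω => by rw [hω.2]
    _ = ∫⁻ ω in A ∩ {ω | T ω = n}, ∫⁻ ω', H ω' ∂M.μ (ω n) ∂M.μ y :=
        M.setLIntegral_comp_shift y (hA.inter_setOf_eq hT n) hH
    _ = _ := setLIntegral_congr_fun (hmeas n) fun ω hω => by rw [hω.2]

lemma measure_apply_eq_mul_le (s r t : S) (n k : ℕ) :
    M.μ s {ω | ω n = r} * M.μ r {ω | ω k = t} ≤ M.μ s {ω | ω (n + k) = t} := by
  have hA : IsEventBefore (fun _ => n) {ω : ℕ → S | ω n = r} :=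
    fun ω ω' h (hω : ω n = r) => show ω' n = r from h n le_rfl ▸ hω
  have hB := measurableSet_apply_eq (S := S) k t
  have hB' := measurableSet_apply_eq (S := S) (n + k) t
  calc M.μ s {ω | ω n = r} * M.μ r {ω | ω k = t}
      = ∫⁻ ω in {ω | ω n = r}, ∫⁻ ω', {ω' | ω' k = t}.indicator 1 ω' ∂M.μ (ω n) ∂M.μ s := by
        rw [setLIntegral_congr_fun (hA.measurableSet (isStoppingTime_const n))
          fun ω (hω : ω n = r) => by rw [hω, lintegral_indicator_one hB], setLIntegral_const,
          mul_comm]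
    _ = ∫⁻ ω in {ω | ω n = r}, {ω | ω (n + k) = t}.indicator 1 ω ∂M.μ s :=
        (M.setLIntegral_comp_shift s hA (measurable_const.indicator hB)).symm
    _ ≤ M.μ s {ω | ω (n + k) = t} :=
        (setLIntegral_le_lintegral _ _).trans_eq (lintegral_indicator_one hB')

lemma measure_apply_eq_pos_of_nstep_pos {n : ℕ} {s t : S} (h : 0 < nstep M n s t) :
    0 < M.μ s {ω | ω n = t} := by
  induction n generalizing t with
  | zero =>
    obtain rfl : s = t := by
      by_contra hst
      simp [nstep, nstepFn, hst] at h
    simp [measure_apply_zero_eq]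
  | succ n ih =>
    obtain ⟨r, hr⟩ : ∃ r, 0 < nstep M n s r * M.P r t := by
      by_contra! hall
      have hzero : nstep M (n + 1) s t = 0 :=
        (tsum_congr fun r => le_antisymm (hall r)
          (mul_nonneg (nstepFn_nonneg M.P_nonneg n s r) (M.P_nonneg r t))).trans tsum_zero
      exact h.ne' hzero
    obtain ⟨hsr, hrt⟩ := (pos_and_pos_or_neg_and_neg_of_mul_pos hr).resolve_right
      fun h' => h'.1.not_ge (nstepFn_nonneg M.P_nonneg n s r)
    calc 0 < M.μ s {ω | ω n = r} * M.μ r {ω | ω 1 = t} :=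
          ENNReal.mul_pos (ih hsr).ne'
            ((ENNReal.ofReal_pos.2 hrt).trans_le (M.ofReal_P_le_measure_apply_one r t)).ne'
      _ ≤ M.μ s {ω | ω (n + 1) = t} := M.measure_apply_eq_mul_le s r t n 1

lemma exists_pos_measure_apply_eq (hirr : MCIrreducible M) (s y : S) :
    ∃ k, 1 ≤ k ∧ 0 < M.μ s {ω | ω k = y} := by
  obtain ⟨t, ht⟩ : ∃ t, 0 < M.P s t := by
    by_contra! hall
    have hzero : M.P s = 0 := funext fun t => le_antisymm (hall t) (M.P_nonneg s t)
    exact one_ne_zero ((M.P_rowsum s).unique (hzero ▸ hasSum_zero))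
  obtain ⟨n, hn⟩ := hirr t y
  refine ⟨1 + n, by omega, ?_⟩
  calc 0 < M.μ s {ω | ω 1 = t} * M.μ t {ω | ω n = y} :=
        ENNReal.mul_pos
          ((ENNReal.ofReal_pos.2 ht).trans_le (M.ofReal_P_le_measure_apply_one s t)).ne'
          (M.measure_apply_eq_pos_of_nstep_pos hn).ne'
    _ ≤ M.μ s {ω | ω (1 + n) = y} := M.measure_apply_eq_mul_le s t y 1 n

lemma lintegral_apply_iterTime_le {τ : (ℕ → S) → ℕ} (hτ : IsStoppingTime τ) (G : S → ℝ≥0∞)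
    (C : ℝ≥0∞) (hG : ∀ t, ∫⁻ ω, G (ω (τ ω)) ∂M.μ t ≤ G t + C) (s : S) (r : ℕ) :
    ∫⁻ ω, G (ω (iterTime τ ω r)) ∂M.μ s ≤ G s + r * C := by
  induction r with
  | zero => simp [iterTime, M.lintegral_apply_zero]
  | succ r ih =>
    have hmarkov := M.setLIntegral_comp_shift_stoppingTime s (isStoppingTime_iterTime hτ r)
      (A := Set.univ) (fun _ _ _ h => h) ((measurable_of_countable G).comp hτ.measurable_apply)
    rw [Measure.restrict_univ] at hmarkov
    calc ∫⁻ ω, G (ω (iterTime τ ω (r + 1))) ∂M.μ s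
        = ∫⁻ ω, ∫⁻ ω', G (ω' (τ ω')) ∂M.μ (ω (iterTime τ ω r)) ∂M.μ s := hmarkov
      _ ≤ ∫⁻ ω, (G (ω (iterTime τ ω r)) + C) ∂M.μ s := lintegral_mono fun ω => hG _
      _ ≤ G s + r * C + C := by
        rw [lintegral_add_right _ measurable_const, lintegral_const, measure_univ, mul_one]
        gcongr
      _ = G s + (r + 1 : ℕ) * C := by push_cast; ring

lemma measure_add_setLIntegral_survivalSet_succ_le {τ : (ℕ → S) → ℕ} (hτ : IsStoppingTime τ)
    {D : Set (ℕ → S)} (hD : IsEventBefore τ D) (V : S → ℝ≥0∞)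
    (hV : ∀ s, ∫⁻ ω in D, V (ω (τ ω)) ∂M.μ s + 1 ≤ V s) (y : S) (k : ℕ) :
    M.μ y (survivalSet τ D k)
        + ∫⁻ ω in survivalSet τ D (k + 1), V (ω (iterTime τ ω (k + 1))) ∂M.μ y
      ≤ ∫⁻ ω in survivalSet τ D k, V (ω (iterTime τ ω k)) ∂M.μ y := by
  have hA := isEventBefore_survivalSet hτ hD k
  have hAm := hA.measurableSet (isStoppingTime_iterTime hτ k)
  have hA'm := (isEventBefore_survivalSet hτ hD (k + 1)).measurableSet
    (isStoppingTime_iterTime hτ (k + 1))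
  have hDm := hD.measurableSet hτ
  set H : (ℕ → S) → ℝ≥0∞ := fun ω' => D.indicator (fun ω' => V (ω' (τ ω'))) ω' + 1
  have hH : Measurable H :=
    (((measurable_of_countable V).comp hτ.measurable_apply).indicator hDm).add measurable_const
  have hHV : ∀ t, ∫⁻ ω', H ω' ∂M.μ t ≤ V t := fun t => by
    simpa [H, lintegral_add_right _ measurable_const, lintegral_indicator hDm] using hV t
  have hsplit : ∀ ω ∈ survivalSet τ D k, H (shift (iterTime τ ω k) ω)
      = (survivalSet τ D (k + 1)).indicator (fun ω => V (ω (iterTime τ ω (k + 1)))) ω + 1 := by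
    intro ω hω
    by_cases hD' : shift (iterTime τ ω k) ω ∈ D
    · simp only [H, Set.indicator_of_mem hD',
        Set.indicator_of_mem (mem_survivalSet_succ.2 ⟨hω, hD'⟩)]
      rfl
    · simp [H, Set.indicator_of_notMem hD', Set.indicator_of_notMem
        (fun h => hD' (mem_survivalSet_succ.1 h).2 : ω ∉ survivalSet τ D (k + 1))]
  calc M.μ y (survivalSet τ D k)
        + ∫⁻ ω in survivalSet τ D (k + 1), V (ω (iterTime τ ω (k + 1))) ∂M.μ y
      = ∫⁻ ω in survivalSet τ D k, H (shift (iterTime τ ω k) ω) ∂M.μ y := by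
        rw [setLIntegral_congr_fun hAm hsplit, lintegral_add_right _ measurable_const,
          setLIntegral_indicator hA'm, Set.inter_eq_left.2 fun ω h => (mem_survivalSet_succ.1 h).1,
          setLIntegral_const, one_mul, add_comm]
    _ = ∫⁻ ω in survivalSet τ D k, ∫⁻ ω', H ω' ∂M.μ (ω (iterTime τ ω k)) ∂M.μ y :=
        M.setLIntegral_comp_shift_stoppingTime y (isStoppingTime_iterTime hτ k) hA hH
    _ ≤ ∫⁻ ω in survivalSet τ D k, V (ω (iterTime τ ω k)) ∂M.μ y :=
        lintegral_mono fun ω => hHV _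

theorem tsum_measure_survivalSet_le {τ : (ℕ → S) → ℕ} (hτ : IsStoppingTime τ)
    {D : Set (ℕ → S)} (hD : IsEventBefore τ D) (V : S → ℝ≥0∞)
    (hV : ∀ s, ∫⁻ ω in D, V (ω (τ ω)) ∂M.μ s + 1 ≤ V s) (y : S) :
    ∑' k, M.μ y (survivalSet τ D k) ≤ V y := by
  have hpartial : ∀ N, ∑ k ∈ Finset.range N, M.μ y (survivalSet τ D k)
      + ∫⁻ ω in survivalSet τ D N, V (ω (iterTime τ ω N)) ∂M.μ y ≤ V y := by
    intro N
    induction N with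
    | zero => simp [survivalSet, iterTime, M.lintegral_apply_zero]
    | succ N ih =>
      rw [Finset.sum_range_succ, add_assoc]
      exact (add_le_add le_rfl
        (M.measure_add_setLIntegral_survivalSet_succ_le hτ hD V hV y N)).trans ih
  rw [ENNReal.tsum_eq_iSup_nat]
  exact iSup_le fun N => le_self_add.trans (hpartial N)

lemma exists_measure_avoidSet_le_lt_one (hirr : MCIrreducible M) {S0 : Set S}
    (hS0 : S0.Finite) (y : S) :
    ∃ m, 1 ≤ m ∧ ∃ β < 1, ∀ s ∈ S0, M.μ s (avoidSet y m) ≤ β := by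
  choose K hK1 hKpos using fun s => M.exists_pos_measure_apply_eq hirr s y
  obtain ⟨m₀, hm₀⟩ := (hS0.image K).bddAbove
  refine ⟨max 1 m₀, le_max_left _ _, hS0.exists_lt_forall_le (by simp) fun s hs => ?_⟩
  calc M.μ s (avoidSet y (max 1 m₀)) ≤ M.μ s {ω | ω (K s) = y}ᶜ :=
        measure_mono fun ω hω => hω (K s) (hK1 s) ((hm₀ ⟨s, hs, rfl⟩).trans (le_max_right _ _))
    _ = 1 - M.μ s {ω | ω (K s) = y} := prob_compl_eq_one_sub (measurableSet_apply_eq _ _)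
    _ < 1 := ENNReal.sub_lt_self ENNReal.one_ne_top one_ne_zero (hKpos s).ne'

end

lemma setLIntegral_trialFailure_add_one_le {u : S → ℕ} {S0 : Set S} {m : ℕ} {y : S}
    (W : S → ℝ≥0∞) {C β c : ℝ≥0∞} (hc : C + c * β + 1 ≤ c)
    (hout : ∀ s ∉ S0, ∫⁻ ω, W (ω (u s)) ∂M.μ s + 1 ≤ W s)
    (hin : ∀ s ∈ S0, ∫⁻ ω, W (ω (iterTime (fun ω => u (ω 0)) ω m)) ∂M.μ s ≤ C)
    (hfail : ∀ s ∈ S0, M.μ s (avoidSet y m) ≤ β) (s : S) :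
    ∫⁻ ω in trialFailure S0 y m, (W (ω (trialTime u S0 m ω)) + c) ∂M.μ s + 1 ≤ W s + c := by
  by_cases hs : s ∈ S0
  · have hT : ∀ᵐ ω ∂M.μ s, trialTime u S0 m ω = iterTime (fun ω => u (ω 0)) ω m := by
      filter_upwards [M.ae_apply_zero_eq s] with ω h0
      simp [trialTime, h0, hs]
    have hD : M.μ s (trialFailure S0 y m) ≤ β := by
      refine (measure_mono_ae ?_).trans (hfail s hs)
      filter_upwards [M.ae_apply_zero_eq s] with ω h0 hω
      exact hω (h0 ▸ hs)
    calc ∫⁻ ω in trialFailure S0 y m, (W (ω (trialTime u S0 m ω)) + c) ∂M.μ s + 1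
        = ∫⁻ ω in trialFailure S0 y m, W (ω (trialTime u S0 m ω)) ∂M.μ s
            + c * M.μ s (trialFailure S0 y m) + 1 := by
          rw [lintegral_add_right _ measurable_const, setLIntegral_const]
      _ ≤ C + c * β + 1 := by
          gcongr
          calc _ ≤ ∫⁻ ω, W (ω (trialTime u S0 m ω)) ∂M.μ s := setLIntegral_le_lintegral _ _
            _ = ∫⁻ ω, W (ω (iterTime (fun ω => u (ω 0)) ω m)) ∂M.μ s :=
                lintegral_congr_ae (hT.mono fun ω h => by simp only [h])
            _ ≤ C := hin s hs
      _ ≤ W s + c := hc.trans le_add_self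
  · have hT : ∀ᵐ ω ∂M.μ s, trialTime u S0 m ω = u s := by
      filter_upwards [M.ae_apply_zero_eq s] with ω h0
      simp [trialTime, h0, hs, iterTime_one]
    calc ∫⁻ ω in trialFailure S0 y m, (W (ω (trialTime u S0 m ω)) + c) ∂M.μ s + 1
        ≤ ∫⁻ ω, (W (ω (trialTime u S0 m ω)) + c) ∂M.μ s + 1 :=
          add_le_add (setLIntegral_le_lintegral _ _) le_rfl
      _ = ∫⁻ ω, W (ω (u s)) ∂M.μ s + 1 + c := by
          have hWT : ∫⁻ ω, W (ω (trialTime u S0 m ω)) ∂M.μ s = ∫⁻ ω, W (ω (u s)) ∂M.μ s :=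
            lintegral_congr_ae (hT.mono fun ω h => by simp only [h])
          rw [lintegral_add_right _ measurable_const, lintegral_const, measure_univ, mul_one, hWT,
            add_right_comm]
      _ ≤ W s + c := by
          gcongr
          exact hout s hs

lemma lintegral_lyapunov_add_one_le {u : S → ℕ} {f : S → ℝ} {c δ : ℝ} (hc : ∀ t, c ≤ f t)
    (hδ : 0 < δ) {s : S}
    (hint : Integrable (fun ω => f (ω (sigmaT u ω 1)) - f (ω (sigmaT u ω 0))) (M.μ s))
    (hdrift : ∫ ω, (f (ω (sigmaT u ω 1)) - f (ω (sigmaT u ω 0))) ∂M.μ s ≤ -δ) :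
    ∫⁻ ω, ENNReal.ofReal ((f (ω (u s)) - c) / δ) ∂M.μ s + 1 ≤ ENNReal.ofReal ((f s - c) / δ) := by
  have hae : (fun ω => f (ω (sigmaT u ω 1)) - f (ω (sigmaT u ω 0)))
      =ᵐ[M.μ s] fun ω => f (ω (u s)) - f s :=
    (M.ae_apply_sigmaT_one_eq u s).mono fun ω h => by simp only [h.1, h.2]
  have hX : Integrable (fun ω => f (ω (u s))) (M.μ s) :=
    ((hint.congr hae).add (integrable_const (f s))).congr
      (ae_of_all _ fun ω => sub_add_cancel (f (ω (u s))) (f s))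
  have hmean : ∫ ω, f (ω (u s)) ∂M.μ s ≤ f s - δ := by
    rw [integral_congr_ae hae, integral_sub hX (integrable_const _), integral_const] at hdrift
    simp at hdrift
    linarith
  have hlow : c ≤ ∫ ω, f (ω (u s)) ∂M.μ s := by
    simpa using integral_mono (integrable_const c) hX fun ω => hc _
  rw [lintegral_ofReal_sub_div_eq hX (fun ω => hc _) hδ.le, ← ENNReal.ofReal_one,
    ← ENNReal.ofReal_add (div_nonneg (sub_nonneg.2 hlow) hδ.le) zero_le_one]
  refine ENNReal.ofReal_le_ofReal ?_
  rw [div_add_one hδ.ne', div_le_div_iff_of_pos_right hδ]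
  linarith

lemma lintegral_lyapunov_ne_top {u : S → ℕ} {f : S → ℝ} (c δ : ℝ) {s : S}
    (hfin : Integrable (fun ω => f (ω (sigmaT u ω 1))) (M.μ s)) :
    ∫⁻ ω, ENNReal.ofReal ((f (ω (u s)) - c) / δ) ∂M.μ s ≠ ⊤ := by
  have hX : Integrable (fun ω => f (ω (u s))) (M.μ s) :=
    hfin.congr ((M.ae_apply_sigmaT_one_eq u s).mono fun ω h => by simp only [h.1])
  have hY : Integrable (fun ω => (f (ω (u s)) - c) / δ) (M.μ s) :=
    (hX.sub (integrable_const c)).div_const δ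
  exact hY.lintegral_lt_top.ne

lemma exists_lintegral_apply_iterTime_le [Countable S] {u : S → ℕ} {S0 : Set S}
    (hS0 : S0.Finite) (W : S → ℝ≥0∞) (hW : ∀ s, W s ≠ ⊤)
    (hout : ∀ s ∉ S0, ∫⁻ ω, W (ω (u s)) ∂M.μ s ≤ W s)
    (hin : ∀ s ∈ S0, ∫⁻ ω, W (ω (u s)) ∂M.μ s ≠ ⊤) (m : ℕ) :
    ∃ C < ⊤, ∀ s ∈ S0, ∫⁻ ω, W (ω (iterTime (fun ω => u (ω 0)) ω m)) ∂M.μ s ≤ C := by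
  obtain ⟨C, hC, hCS0⟩ := hS0.exists_lt_forall_le (by simp) fun s hs => (hin s hs).lt_top
  have hstep : ∀ t, ∫⁻ ω, W (ω (u (ω 0))) ∂M.μ t ≤ W t + C := fun t => by
    rw [lintegral_congr_ae ((M.ae_apply_zero_eq t).mono fun ω h => by rw [h])]
    by_cases ht : t ∈ S0
    · exact (hCS0 t ht).trans le_add_self
    · exact (hout t ht).trans le_self_add
  exact hS0.exists_lt_forall_le (by simp) fun s _ =>
    (M.lintegral_apply_iterTime_le (isStoppingTime_comp_apply_zero u) W C hstep s m).trans_lt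
      (ENNReal.add_lt_top.2 ⟨(hW s).lt_top, ENNReal.mul_lt_top (ENNReal.natCast_lt_top m) hC⟩)

theorem tsum_measure_avoidSet_ne_top [Countable S] (hirr : MCIrreducible M) {u : S → ℕ}
    (hu1 : ∀ s, 1 ≤ u s) {U : ℕ} (huU : ∀ s, u s ≤ U) {S0 : Set S} (hS0 : S0.Finite)
    (W : S → ℝ≥0∞) (hW : ∀ s, W s ≠ ⊤) (hout : ∀ s ∉ S0, ∫⁻ ω, W (ω (u s)) ∂M.μ s + 1 ≤ W s)
    (hin : ∀ s ∈ S0, ∫⁻ ω, W (ω (u s)) ∂M.μ s ≠ ⊤) (y : S) :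
    ∑' n, M.μ y (avoidSet y n) ≠ ⊤ := by
  obtain ⟨m, hm, β, hβ, hfail⟩ := M.exists_measure_avoidSet_le_lt_one hirr hS0 y
  obtain ⟨C, hC, hCS0⟩ := M.exists_lintegral_apply_iterTime_le hS0 W hW
    (fun s hs => le_self_add.trans (hout s hs)) hin m
  have hc : C + (C + 1) / (1 - β) * β + 1 ≤ (C + 1) / (1 - β) := by
    rw [add_right_comm, add_comm, ENNReal.div_one_sub_mul_add hβ]
  have hc_top : (C + 1) / (1 - β) ≠ ⊤ :=
    ENNReal.div_ne_top (ENNReal.add_ne_top.2 ⟨hC.ne, ENNReal.one_ne_top⟩) (tsub_pos_of_lt hβ).ne'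
  have hsurv := M.tsum_measure_survivalSet_le isStoppingTime_trialTime
    (isEventBefore_trialFailure hu1 y) _
    (M.setLIntegral_trialFailure_add_one_le W hc hout hCS0 hfail) y
  have hL : U * m ≠ 0 := (Nat.mul_pos ((hu1 y).trans (huU y)) hm).ne'
  refine ne_top_of_le_ne_top (ENNReal.mul_ne_top (ENNReal.natCast_ne_top (U * m))
    (ENNReal.add_ne_top.2 ⟨hW y, hc_top⟩)) ?_
  calc ∑' n, M.μ y (avoidSet y n)
      ≤ ∑' n, M.μ y (survivalSet (trialTime u S0 m) (trialFailure S0 y m) (n / (U * m))) :=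
        ENNReal.tsum_le_tsum fun n => measure_mono (avoidSet_subset_survivalSet hu1 huU hm y n)
    _ = (U * m : ℕ) * ∑' k, M.μ y (survivalSet (trialTime u S0 m) (trialFailure S0 y m) k) :=
        tsum_comp_div_eq_mul_tsum
          (fun k => M.μ y (survivalSet (trialTime u S0 m) (trialFailure S0 y m) k)) hL
    _ ≤ (U * m : ℕ) * (W y + (C + 1) / (1 - β)) := by gcongr

end MarkovChain

/-- generalized Foster criterion with bounded state-dependent
sampling times: if an irreducible Markov chain on a countable state space admits
a lower-bounded Lyapunov function whose embedded drift is at most `-δ` outside a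
finite set `S0` and whose embedded expectation is finite on `S0`, then it is
positive recurrent. -/
theorem foster_embedded_criterion
    {S : Type} [MeasurableSpace S] [MeasurableSingletonClass S] [Countable S]
    (M : MarkovChain S) (hirr : MCIrreducible M)
    (u : S → ℕ) (hu1 : ∀ y, 1 ≤ u y) (U : ℕ) (huU : ∀ y, u y ≤ U)
    (f : S → ℝ) (hlb : BddBelow (Set.range f))
    (δ : ℝ) (hδ : 0 < δ) (S0 : Set S) (hS0 : S0.Finite)
    (hint : ∀ y ∉ S0,
      Integrable (fun ω => f (ω (sigmaT u ω 1)) - f (ω (sigmaT u ω 0))) (M.μ y))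
    (hdrift : ∀ y ∉ S0,
      ∫ ω, (f (ω (sigmaT u ω 1)) - f (ω (sigmaT u ω 0))) ∂ M.μ y ≤ -δ)
    (hfin : ∀ y ∈ S0, Integrable (fun ω => f (ω (sigmaT u ω 1))) (M.μ y)) :
    PositiveRecurrent M := by
  intro y
  obtain ⟨c, hc⟩ := hlb
  have hcf : ∀ s, c ≤ f s := fun s => hc (Set.mem_range_self s)
  exact M.tsum_measure_avoidSet_ne_top hirr hu1 huU hS0
    (fun s => ENNReal.ofReal ((f s - c) / δ)) (fun _ => ENNReal.ofReal_ne_top)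
    (fun s hs => M.lintegral_lyapunov_add_one_le hcf hδ (hint s hs) (hdrift s hs))
    (fun s hs => M.lintegral_lyapunov_ne_top c δ (hfin s hs)) y
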